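/- arXiv:math/0304119 — 2 statements merged into one kernel-verified Lean document; each statement's English description precedes it below -/
import Mathlib

section
/- Let B be a standard one-dimensional Brownian motion. For any x > 0 and t > 0, the probability that the maximum of B over [0,t] exceeds x equals twice the probability that B(t) exceeds x (the reflection principle). -/
open MeasureTheory ProbabilityTheory Set

noncomputable section

/-- A standard one-dimensional Brownian motion: starts at `0`, has continuous
paths, Gaussian increments with variance `t - s`, and independent increments. -/
def IsStandardBM {Ω : Type*} [MeasureSpace Ω] (B : ℝ → Ω → ℝ) : Prop :=
  (∀ ω, B 0 ω = 0) ∧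
  (∀ ω, Continuous fun t => B t ω) ∧
  (∀ t, Measurable (B t)) ∧
  (∀ s t : ℝ, 0 ≤ s → s ≤ t →
    Measure.map (fun ω => B t ω - B s ω) (volume : Measure Ω) =
      gaussianReal 0 (Real.toNNReal (t - s))) ∧
  (∀ (n : ℕ) (t : Fin (n + 1) → ℝ), Monotone t → (∀ i, 0 ≤ t i) →
    iIndepFun
      (fun i : Fin n => fun ω => B (t i.succ) ω - B (t i.castSucc) ω)
      (volume : Measure Ω))

/-!
Sample the path on the grid `k t / n`. On the event that the grid path first exceeds `x` at
index `k`, the remaining increment `B t - B (k t / n)` is a centred Gaussian independent of the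
path up to index `k`, so reflecting it shows that `B t > x` has at least half the probability of
that event; summing over `k` gives `P(grid path exceeds x) ≤ 2 P(B t > x)`. The same reflection
bounds `P(B t > x + 2ε)` by `P(B t < x)` on each first-passage event, except when the path
overshoots `x` by more than `ε` at the first passage, which by uniform continuity of the paths
has vanishing probability as the mesh shrinks. Letting `n → ∞`, then `ε → 0`, gives equality.
-/
open Filter Topology

lemma Fin.sum_filter_Ico_sub {M : Type*} [AddCommGroup M] (f : ℕ → M) {a b n : ℕ}
    (hab : a ≤ b) (hbn : b ≤ n) :
    ∑ i ∈ Finset.univ.filter (fun i : Fin n => a ≤ (i : ℕ) ∧ (i : ℕ) < b), (f (i + 1) - f i) =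
      f b - f a := by
  rw [Finset.sum_filter,
    Fin.sum_univ_eq_sum_range (fun i => if a ≤ i ∧ i < b then f (i + 1) - f i else 0),
    ← Finset.sum_filter, ← Finset.sum_Ico_sub f hab]
  congr 1
  ext i
  simp only [Finset.mem_filter, Finset.mem_range, Finset.mem_Ico]
  omega

section Reflection

variable {Ω E : Type*} [MeasurableSpace Ω] [MeasurableSpace E] {μ : Measure Ω}
  {Z : Ω → E} {Y : Ω → ℝ} {F : Set E}

lemma ProbabilityTheory.IndepFun.measure_inter_lt_neg_eq (hZY : IndepFun Z Y μ)
    (hY : Measurable Y) (hsymm : μ.map (fun ω => -Y ω) = μ.map Y) (hF : MeasurableSet F)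
    (a : ℝ) : μ (Z ⁻¹' F ∩ {ω | Y ω < -a}) = μ (Z ⁻¹' F ∩ {ω | a < Y ω}) := by
  have hneg : μ (Y ⁻¹' Iio (-a)) = μ (Y ⁻¹' Ioi a) := by
    rw [← Measure.map_apply hY measurableSet_Iio, ← hsymm,
      Measure.map_apply (by fun_prop) measurableSet_Iio]
    congr 1
    ext ω
    simp
  calc μ (Z ⁻¹' F ∩ Y ⁻¹' Iio (-a))
      = μ (Z ⁻¹' F) * μ (Y ⁻¹' Iio (-a)) :=
        hZY.measure_inter_preimage_eq_mul _ _ hF measurableSet_Iio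
    _ = μ (Z ⁻¹' F ∩ Y ⁻¹' Ioi a) := by
        rw [hneg, hZY.measure_inter_preimage_eq_mul _ _ hF measurableSet_Ioi]

lemma ProbabilityTheory.IndepFun.measure_preimage_le_two_mul (hZY : IndepFun Z Y μ)
    (hY : Measurable Y) (hsymm : μ.map (fun ω => -Y ω) = μ.map Y) (hF : MeasurableSet F)
    {f : E → ℝ} {x : ℝ} (hFx : ∀ u ∈ F, x < f u) :
    μ (Z ⁻¹' F) ≤ 2 * μ (Z ⁻¹' F ∩ {ω | x < f (Z ω) + Y ω}) := by
  calc μ (Z ⁻¹' F)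
      ≤ μ (Z ⁻¹' F ∩ {ω | Y ω < -0}) + μ (Z ⁻¹' F ∩ {ω | 0 ≤ Y ω}) := by
        refine (measure_mono fun ω hω => ?_).trans (measure_union_le _ _)
        rcases lt_or_ge (Y ω) 0 with h | h
        · exact Or.inl ⟨hω, by simpa using h⟩
        · exact Or.inr ⟨hω, h⟩
    _ ≤ 2 * μ (Z ⁻¹' F ∩ {ω | 0 ≤ Y ω}) := by
        rw [hZY.measure_inter_lt_neg_eq hY hsymm hF, two_mul]
        gcongr with ω
        exact le_of_lt
    _ ≤ 2 * μ (Z ⁻¹' F ∩ {ω | x < f (Z ω) + Y ω}) := by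
        gcongr 2 * μ ?_
        rintro ω ⟨hω, hYω : 0 ≤ Y ω⟩
        exact ⟨hω, show x < f (Z ω) + Y ω by linarith [hFx _ hω]⟩

/-- Where `f ≤ x + ε`, the event `x + 2ε < f + Y` forces `ε < Y`, whose mirror image `Y < -ε`
forces `f + Y < x`; the paths with `x + ε < f` are paid for by the last term. -/
lemma ProbabilityTheory.IndepFun.measure_inter_lt_add_measure_inter_lt_le
    (hZY : IndepFun Z Y μ) (hZ : Measurable Z) (hY : Measurable Y)
    (hsymm : μ.map (fun ω => -Y ω) = μ.map Y) (hF : MeasurableSet F) {f : E → ℝ}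
    (hf : Measurable f) (x ε : ℝ) :
    μ (Z ⁻¹' F ∩ {ω | x < f (Z ω) + Y ω}) + μ (Z ⁻¹' F ∩ {ω | x + 2 * ε < f (Z ω) + Y ω}) ≤
      μ (Z ⁻¹' F) + μ (Z ⁻¹' F ∩ {ω | x + ε < f (Z ω)}) := by
  set A := Z ⁻¹' F
  have hF' : MeasurableSet (F ∩ {u | f u ≤ x + ε}) :=
    hF.inter (measurableSet_le hf measurable_const)
  have hsplit : μ (A ∩ {ω | x + 2 * ε < f (Z ω) + Y ω}) ≤
      μ (Z ⁻¹' (F ∩ {u | f u ≤ x + ε}) ∩ {ω | ε < Y ω}) + μ (A ∩ {ω | x + ε < f (Z ω)}) := by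
    refine (measure_mono ?_).trans (measure_union_le _ _)
    rintro ω ⟨hω, hW : x + 2 * ε < f (Z ω) + Y ω⟩
    rcases le_or_gt (f (Z ω)) (x + ε) with h | h
    · exact Or.inl ⟨⟨hω, h⟩, show ε < Y ω by linarith⟩
    · exact Or.inr ⟨hω, h⟩
  have hreflect : μ (Z ⁻¹' (F ∩ {u | f u ≤ x + ε}) ∩ {ω | ε < Y ω}) ≤
      μ (A ∩ {ω | f (Z ω) + Y ω < x}) := by
    rw [← hZY.measure_inter_lt_neg_eq hY hsymm hF']
    refine measure_mono ?_
    rintro ω ⟨⟨hω, hle : f (Z ω) ≤ x + ε⟩, hYω : Y ω < -ε⟩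
    exact ⟨hω, show f (Z ω) + Y ω < x by linarith⟩
  have hdisj : μ (A ∩ {ω | x < f (Z ω) + Y ω}) + μ (A ∩ {ω | f (Z ω) + Y ω < x}) ≤ μ A := by
    rw [← measure_union]
    · exact measure_mono (union_subset inter_subset_left inter_subset_left)
    · exact disjoint_left.mpr fun ω ⟨_, h₁⟩ ⟨_, h₂⟩ => lt_asymm (show x < _ from h₁) h₂
    · exact (hF.preimage hZ).inter (measurableSet_lt ((hf.comp hZ).add hY) measurable_const)
  calc μ (A ∩ {ω | x < f (Z ω) + Y ω}) + μ (A ∩ {ω | x + 2 * ε < f (Z ω) + Y ω})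
      ≤ μ (A ∩ {ω | x < f (Z ω) + Y ω}) +
          (μ (A ∩ {ω | f (Z ω) + Y ω < x}) + μ (A ∩ {ω | x + ε < f (Z ω)})) := by
        gcongr
        exact hsplit.trans (add_le_add_left hreflect _)
    _ ≤ μ A + μ (A ∩ {ω | x + ε < f (Z ω)}) := by
        rw [← add_assoc]
        gcongr

end Reflection

lemma IsStandardBM.indepFun_values_increment {Ω : Type*} [MeasureSpace Ω] {B : ℝ → Ω → ℝ}
    (hB : IsStandardBM B) {g : ℕ → ℝ} (hg : Monotone g) (hg0 : g 0 = 0) {k n : ℕ}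
    (hkn : k ≤ n) :
    IndepFun (fun ω (j : Fin (k + 1)) => B (g j) ω) (fun ω => B (g n) ω - B (g k) ω) := by
  obtain ⟨h0, -, hmeas, -, hind⟩ := hB
  set D : Fin n → Ω → ℝ := fun i ω => B (g (i + 1)) ω - B (g i) ω
  have hD : iIndepFun D :=
    hind n (fun i => g i) (fun i j hij => hg hij) (fun i => hg0 ▸ hg (Nat.zero_le _))
  have hsum (ω : Ω) {a b : ℕ} (hab : a ≤ b) (hbn : b ≤ n) :
      ∑ i ∈ Finset.univ.filter (fun i : Fin n => a ≤ (i : ℕ) ∧ (i : ℕ) < b), D i ω =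
        B (g b) ω - B (g a) ω :=
    Fin.sum_filter_Ico_sub (fun i => B (g i) ω) hab hbn
  set S := Finset.univ.filter (fun i : Fin n => (i : ℕ) < k)
  set T := Finset.univ.filter (fun i : Fin n => k ≤ (i : ℕ) ∧ (i : ℕ) < n)
  have hST : Disjoint S T := by
    rw [Finset.disjoint_filter]
    omega
  have hvalues : (fun ω (j : Fin (k + 1)) => B (g j) ω) =
      (fun v (j : Fin (k + 1)) => ∑ i ∈ Finset.univ.filter (fun i : S => (i : ℕ) < j), v i) ∘
        fun ω (i : S) => D i ω := by
    ext ω j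
    calc B (g j) ω = B (g j) ω - B (g 0) ω := by rw [hg0, h0, sub_zero]
      _ = ∑ i ∈ Finset.univ.filter (fun i : Fin n => 0 ≤ (i : ℕ) ∧ (i : ℕ) < j), D i ω :=
        (hsum ω (Nat.zero_le _) (by omega)).symm
      _ = _ := by
        rw [Function.comp_apply, Finset.sum_filter, Finset.sum_filter,
          Finset.sum_coe_sort S (fun i => if (i : ℕ) < j then D i ω else 0), Finset.sum_filter]
        refine Finset.sum_congr rfl fun i _ => ?_
        split_ifs <;> first | rfl | omega
  have hincrement : (fun ω => B (g n) ω - B (g k) ω) =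
      (fun v => ∑ i : T, v i) ∘ fun ω (i : T) => D i ω := by
    ext ω
    rw [Function.comp_apply, Finset.sum_coe_sort T (fun i => D i ω), hsum ω hkn le_rfl]
  rw [hvalues, hincrement]
  exact (hD.indepFun_finset S T hST fun i => (hmeas _).sub (hmeas _)).comp
    (by fun_prop) (by fun_prop)

lemma IsStandardBM.map_neg_increment {Ω : Type*} [MeasureSpace Ω] {B : ℝ → Ω → ℝ}
    (hB : IsStandardBM B) {s t : ℝ} (hs : 0 ≤ s) (hst : s ≤ t) :
    (volume : Measure Ω).map (fun ω => -(B t ω - B s ω)) =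
      (volume : Measure Ω).map (fun ω => B t ω - B s ω) := by
  obtain ⟨-, -, hmeas, hlaw, -⟩ := hB
  rw [show (fun ω => -(B t ω - B s ω)) = (fun y => -y) ∘ fun ω => B t ω - B s ω from rfl,
    ← Measure.map_map (g := fun y => -y) (f := fun ω => B t ω - B s ω) measurable_neg
      ((hmeas t).sub (hmeas s)), hlaw s t hs hst,
    gaussianReal_map_neg, neg_zero]

def gridPoint (t : ℝ) (n k : ℕ) : ℝ := k * t / n

section Grid

variable {t : ℝ} {n k : ℕ}

lemma gridPoint_zero : gridPoint t n 0 = 0 := by simp [gridPoint]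

lemma gridPoint_self (hn : n ≠ 0) : gridPoint t n n = t :=
  mul_div_cancel_left₀ t (Nat.cast_ne_zero.mpr hn)

lemma gridPoint_succ_sub : gridPoint t n (k + 1) - gridPoint t n k = t / n := by
  simp only [gridPoint]
  push_cast
  ring

lemma gridPoint_mono (ht : 0 ≤ t) : Monotone (gridPoint t n) := fun _ _ _ => by
  unfold gridPoint
  gcongr

lemma gridPoint_mem_Icc (ht : 0 ≤ t) (hk : k ≤ n) : gridPoint t n k ∈ Icc 0 t := by
  refine ⟨by unfold gridPoint; positivity, ?_⟩
  rcases Nat.eq_zero_or_pos n with rfl | hn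
  · simpa [gridPoint] using ht
  · rw [gridPoint, div_le_iff₀ (by positivity), mul_comm t]
    gcongr

lemma exists_dist_gridPoint_le (ht : 0 < t) (hn : n ≠ 0) {s : ℝ} (hs : s ∈ Icc 0 t) :
    ∃ k ≤ n, dist (gridPoint t n k) s ≤ t / n := by
  have hn' : (0 : ℝ) < n := by positivity
  have hy : 0 ≤ s * n / t := by have := hs.1; positivity
  refine ⟨⌊s * n / t⌋₊, Nat.floor_le_of_le ?_, ?_⟩
  · rw [div_le_iff₀ ht]
    nlinarith [hs.2]
  · have hlo := Nat.floor_le hy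
    have hhi := Nat.lt_floor_add_one (s * n / t)
    rw [le_div_iff₀ ht] at hlo
    rw [div_lt_iff₀ ht] at hhi
    rw [Real.dist_eq, abs_le, gridPoint]
    constructor
    · rw [le_sub_iff_add_le, ← sub_eq_neg_add, le_div_iff₀ hn']
      rw [sub_mul, div_mul_cancel₀ _ hn'.ne']
      linarith
    · rw [sub_le_iff_le_add, div_le_iff₀ hn', add_mul, div_mul_cancel₀ _ hn'.ne']
      linarith

end Grid

section GridEvents

variable {Ω : Type*} (B : ℝ → Ω → ℝ) (x t : ℝ) (n : ℕ)

def gridValues (k : ℕ) (ω : Ω) (j : Fin (k + 1)) : ℝ := B (gridPoint t n j) ω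

def firstCrossingAtLast (k : ℕ) : Set (Fin (k + 1) → ℝ) :=
  {u | x < u (Fin.last k) ∧ ∀ j : Fin (k + 1), (j : ℕ) < k → u j ≤ x}

def firstPassage (k : ℕ) : Set Ω := gridValues B t n k ⁻¹' firstCrossingAtLast x k

def crossesOnGrid : Set Ω := {ω | ∃ k ≤ n, x < B (gridPoint t n k) ω}

def overshootsOnGrid (ε : ℝ) : Set Ω :=
  ⋃ k ∈ Finset.range (n + 1), firstPassage B x t n k ∩ {ω | x + ε < B (gridPoint t n k) ω}

variable {B x t n} {k : ℕ} {ω : Ω}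

lemma mem_firstPassage :
    ω ∈ firstPassage B x t n k ↔
      x < B (gridPoint t n k) ω ∧ ∀ j < k, B (gridPoint t n j) ω ≤ x :=
  and_congr (by simp [gridValues]) ⟨fun h j hj => h ⟨j, by omega⟩ hj, fun h j hj => h j hj⟩

lemma pairwise_disjoint_firstPassage : Pairwise (Function.onFun Disjoint (firstPassage B x t n)) :=
  (pairwise_disjoint_on _).2 fun j _ hjk => disjoint_left.2 fun _ hj hk =>
    ((mem_firstPassage.1 hk).2 j hjk).not_gt (mem_firstPassage.1 hj).1

lemma crossesOnGrid_eq_biUnion :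
    crossesOnGrid B x t n = ⋃ k ∈ Finset.range (n + 1), firstPassage B x t n k := by
  ext ω
  simp only [crossesOnGrid, mem_ofPred_eq, mem_iUnion, Finset.mem_range, exists_prop,
    mem_firstPassage]
  constructor
  · rintro ⟨k, hk, hxk⟩
    have hex : ∃ k, x < B (gridPoint t n k) ω := ⟨k, hxk⟩
    refine ⟨Nat.find hex, by have := Nat.find_min' hex hxk; omega, Nat.find_spec hex,
      fun j hj => not_lt.1 (Nat.find_min hex hj)⟩
  · rintro ⟨k, hk, hxk, -⟩
    exact ⟨k, by omega, hxk⟩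

lemma measurableSet_firstCrossingAtLast : MeasurableSet (firstCrossingAtLast x k) := by
  unfold firstCrossingAtLast
  measurability

variable [MeasurableSpace Ω]

lemma measurableSet_firstPassage (hmeas : ∀ s, Measurable (B s)) :
    MeasurableSet (firstPassage B x t n k) :=
  measurableSet_firstCrossingAtLast.preimage (measurable_pi_lambda _ fun _ => hmeas _)

lemma measurableSet_crossesOnGrid (hmeas : ∀ s, Measurable (B s)) :
    MeasurableSet (crossesOnGrid B x t n) := by
  rw [crossesOnGrid_eq_biUnion]
  exact Finset.measurableSet_biUnion _ fun _ _ => measurableSet_firstPassage hmeas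

lemma measure_crossesOnGrid_inter (μ : Measure Ω) (hmeas : ∀ s, Measurable (B s)) {C : Set Ω}
    (hC : MeasurableSet C) :
    μ (crossesOnGrid B x t n ∩ C) = ∑ k ∈ Finset.range (n + 1), μ (firstPassage B x t n k ∩ C) := by
  rw [crossesOnGrid_eq_biUnion, iUnion₂_inter, measure_biUnion_finset]
  · exact fun j _ k _ hjk =>
      (pairwise_disjoint_firstPassage hjk).mono inter_subset_left inter_subset_left
  · exact fun k _ => (measurableSet_firstPassage hmeas).inter hC

lemma measure_crossesOnGrid (μ : Measure Ω) (hmeas : ∀ s, Measurable (B s)) :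
    μ (crossesOnGrid B x t n) = ∑ k ∈ Finset.range (n + 1), μ (firstPassage B x t n k) := by
  simpa using measure_crossesOnGrid_inter μ hmeas MeasurableSet.univ

lemma measurableSet_overshootsOnGrid (hmeas : ∀ s, Measurable (B s)) (ε : ℝ) :
    MeasurableSet (overshootsOnGrid B x t n ε) :=
  Finset.measurableSet_biUnion _ fun _ _ =>
    (measurableSet_firstPassage hmeas).inter (measurableSet_lt measurable_const (hmeas _))

lemma measure_overshootsOnGrid (μ : Measure Ω) (hmeas : ∀ s, Measurable (B s)) (ε : ℝ) :
    μ (overshootsOnGrid B x t n ε) = ∑ k ∈ Finset.range (n + 1),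
      μ (firstPassage B x t n k ∩ {ω | x + ε < B (gridPoint t n k) ω}) := by
  rw [overshootsOnGrid, measure_biUnion_finset]
  · exact fun j _ k _ hjk =>
      (pairwise_disjoint_firstPassage hjk).mono inter_subset_left inter_subset_left
  · exact fun _ _ => (measurableSet_firstPassage hmeas).inter
      (measurableSet_lt measurable_const (hmeas _))

end GridEvents

section Discrete

variable {Ω : Type*} [MeasureSpace Ω] {B : ℝ → Ω → ℝ} {x t : ℝ} {n k : ℕ}

lemma IsStandardBM.indepFun_gridValues (hB : IsStandardBM B) (ht : 0 ≤ t) (hn : n ≠ 0)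
    (hk : k ≤ n) : IndepFun (gridValues B t n k) (fun ω => B t ω - B (gridPoint t n k) ω) := by
  have := hB.indepFun_values_increment (gridPoint_mono (n := n) ht) gridPoint_zero hk
  rwa [gridPoint_self hn] at this

lemma IsStandardBM.measure_firstPassage_le (hB : IsStandardBM B) (ht : 0 ≤ t) (hn : n ≠ 0)
    (hk : k ≤ n) :
    volume (firstPassage B x t n k) ≤ 2 * volume (firstPassage B x t n k ∩ {ω | x < B t ω}) := by
  have ⟨_, _, hmeas, _, _⟩ := hB
  have hind := hB.indepFun_gridValues ht hn hk
  have hsymm := hB.map_neg_increment (gridPoint_mem_Icc ht hk).1 (gridPoint_mem_Icc ht hk).2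
  have := hind.measure_preimage_le_two_mul ((hmeas t).sub (hmeas _)) hsymm
    (measurableSet_firstCrossingAtLast (x := x)) (f := fun u => u (Fin.last k)) (x := x)
    fun _ hu => hu.1
  simpa [firstPassage, gridValues] using this

lemma IsStandardBM.measure_firstPassage_inter_add_le (hB : IsStandardBM B) (ht : 0 ≤ t)
    (hn : n ≠ 0) (hk : k ≤ n) (ε : ℝ) :
    volume (firstPassage B x t n k ∩ {ω | x < B t ω}) +
        volume (firstPassage B x t n k ∩ {ω | x + 2 * ε < B t ω}) ≤
      volume (firstPassage B x t n k) +
        volume (firstPassage B x t n k ∩ {ω | x + ε < B (gridPoint t n k) ω}) := by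
  have ⟨_, _, hmeas, _, _⟩ := hB
  have hind := hB.indepFun_gridValues ht hn hk
  have hsymm := hB.map_neg_increment (gridPoint_mem_Icc ht hk).1 (gridPoint_mem_Icc ht hk).2
  have := hind.measure_inter_lt_add_measure_inter_lt_le
    (measurable_pi_lambda _ fun _ => hmeas _) ((hmeas t).sub (hmeas _)) hsymm
    (measurableSet_firstCrossingAtLast (x := x)) (measurable_pi_apply (Fin.last k)) x ε
  simpa [firstPassage, gridValues] using this

lemma IsStandardBM.measure_crossesOnGrid_le (hB : IsStandardBM B) (ht : 0 ≤ t) (hn : n ≠ 0) :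
    volume (crossesOnGrid B x t n) ≤ 2 * volume {ω | x < B t ω} := by
  have ⟨_, _, hmeas, _, _⟩ := hB
  calc volume (crossesOnGrid B x t n)
      = ∑ k ∈ Finset.range (n + 1), volume (firstPassage B x t n k) :=
        measure_crossesOnGrid volume hmeas
    _ ≤ ∑ k ∈ Finset.range (n + 1), 2 * volume (firstPassage B x t n k ∩ {ω | x < B t ω}) :=
        Finset.sum_le_sum fun k hk =>
          hB.measure_firstPassage_le ht hn (Nat.lt_succ_iff.1 (Finset.mem_range.1 hk))
    _ = 2 * volume (crossesOnGrid B x t n ∩ {ω | x < B t ω}) := by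
        rw [← Finset.mul_sum,
          measure_crossesOnGrid_inter volume hmeas (measurableSet_lt measurable_const (hmeas t))]
    _ ≤ 2 * volume {ω | x < B t ω} := by
        gcongr
        exact inter_subset_right

lemma IsStandardBM.measure_lt_add_measure_lt_le (hB : IsStandardBM B) (ht : 0 ≤ t) (hn : n ≠ 0)
    {ε : ℝ} (hε : 0 ≤ ε) :
    volume {ω | x < B t ω} + volume {ω | x + 2 * ε < B t ω} ≤
      volume (crossesOnGrid B x t n) + volume (overshootsOnGrid B x t n ε) := by
  have ⟨_, _, hmeas, _, _⟩ := hB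
  have hcross {c : ℝ} (hc : x ≤ c) : crossesOnGrid B x t n ∩ {ω | c < B t ω} = {ω | c < B t ω} :=
    inter_eq_right.2 fun ω (hω : c < B t ω) => ⟨n, le_rfl, by rw [gridPoint_self hn]; linarith⟩
  rw [← hcross le_rfl, ← hcross (by linarith : x ≤ x + 2 * ε),
    measure_crossesOnGrid_inter volume hmeas (measurableSet_lt measurable_const (hmeas t)),
    measure_crossesOnGrid_inter volume hmeas (measurableSet_lt measurable_const (hmeas t)),
    measure_overshootsOnGrid volume hmeas, measure_crossesOnGrid volume hmeas,
    ← Finset.sum_add_distrib, ← Finset.sum_add_distrib]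
  exact Finset.sum_le_sum fun k hk =>
    hB.measure_firstPassage_inter_add_le ht hn (Nat.lt_succ_iff.1 (Finset.mem_range.1 hk)) ε

end Discrete

section Pathwise

variable {Ω : Type*} {B : ℝ → Ω → ℝ} {x t ε : ℝ} {n : ℕ} {ω : Ω}

lemma lt_iSup_of_mem_crossesOnGrid (ht : 0 ≤ t) (hcont : Continuous fun s => B s ω)
    (hω : ω ∈ crossesOnGrid B x t n) : x < ⨆ s : Icc 0 t, B s ω := by
  obtain ⟨k, hk, hxk⟩ := hω
  exact hxk.trans_le <| le_ciSup (f := fun s : Icc 0 t => B s ω)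
    (isCompact_range (hcont.comp continuous_subtype_val)).bddAbove
    ⟨gridPoint t n k, gridPoint_mem_Icc ht hk⟩

lemma eventually_mem_crossesOnGrid (ht : 0 < t) (hcont : Continuous fun s => B s ω)
    (hω : x < ⨆ s : Icc 0 t, B s ω) : ∀ᶠ n in atTop, ω ∈ crossesOnGrid B x t n := by
  have : Nonempty (Icc 0 t) := ⟨⟨0, le_rfl, ht.le⟩⟩
  obtain ⟨⟨s, hs⟩, hxs⟩ := exists_lt_of_lt_ciSup hω
  obtain ⟨δ, hδ, hball⟩ :=
    Metric.eventually_nhds_iff.1 ((hcont.tendsto s).eventually (lt_mem_nhds hxs))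
  filter_upwards [(tendsto_const_div_atTop_nhds_zero_nat t).eventually (gt_mem_nhds hδ),
    eventually_ne_atTop 0] with n hnδ hn
  obtain ⟨k, hk, hdist⟩ := exists_dist_gridPoint_le ht hn hs
  exact ⟨k, hk, hball (hdist.trans_lt hnδ)⟩

lemma eventually_notMem_overshootsOnGrid (ht : 0 ≤ t) (h0 : B 0 ω ≤ x)
    (hcont : Continuous fun s => B s ω) (hε : 0 < ε) :
    ∀ᶠ n in atTop, ω ∉ overshootsOnGrid B x t n ε := by
  obtain ⟨δ, hδ, hunif⟩ := Metric.uniformContinuousOn_iff.1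
    (isCompact_Icc.uniformContinuousOn_of_continuous hcont.continuousOn) ε hε
  filter_upwards [(tendsto_const_div_atTop_nhds_zero_nat t).eventually (gt_mem_nhds hδ)]
    with n hnδ hω
  simp only [overshootsOnGrid, mem_iUnion, Finset.mem_range] at hω
  obtain ⟨k, hk, hA, hover : x + ε < B (gridPoint t n k) ω⟩ := hω
  obtain ⟨j, rfl⟩ : ∃ j, k = j + 1 := Nat.exists_eq_succ_of_ne_zero <| by
    rintro rfl
    rw [gridPoint_zero] at hover
    linarith
  have hjump := hunif (gridPoint t n (j + 1)) (gridPoint_mem_Icc ht (by omega))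
    (gridPoint t n j) (gridPoint_mem_Icc ht (by omega))
    (by rwa [Real.dist_eq, gridPoint_succ_sub, abs_of_nonneg (by positivity)])
  rw [Real.dist_eq] at hjump
  linarith [(mem_firstPassage.1 hA).2 j j.lt_succ_self,
    le_abs_self (B (gridPoint t n (j + 1)) ω - B (gridPoint t n j) ω)]

end Pathwise

section Limits

variable {Ω : Type*} [MeasurableSpace Ω] (μ : Measure Ω) [IsFiniteMeasure μ] {B : ℝ → Ω → ℝ}
  {x t ε : ℝ}

lemma tendsto_measure_crossesOnGrid (hmeas : ∀ s, Measurable (B s))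
    (hcont : ∀ ω, Continuous fun s => B s ω) (ht : 0 < t) :
    Tendsto (fun n => μ (crossesOnGrid B x t n)) atTop
      (𝓝 (μ {ω | x < ⨆ s : Icc 0 t, B s ω})) := by
  refine tendsto_measure_of_tendsto_indicator_of_isFiniteMeasure atTop μ
    (fun _ => measurableSet_crossesOnGrid hmeas) fun ω => ?_
  by_cases hω : x < ⨆ s : Icc 0 t, B s ω
  · exact (eventually_mem_crossesOnGrid ht (hcont ω) hω).mono fun n hn => iff_of_true hn hω
  · exact Eventually.of_forall fun n =>
      iff_of_false (fun hn => hω (lt_iSup_of_mem_crossesOnGrid ht.le (hcont ω) hn)) hω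

lemma tendsto_measure_overshootsOnGrid (hmeas : ∀ s, Measurable (B s))
    (hcont : ∀ ω, Continuous fun s => B s ω) (h0 : ∀ ω, B 0 ω ≤ x) (ht : 0 ≤ t) (hε : 0 < ε) :
    Tendsto (fun n => μ (overshootsOnGrid B x t n ε)) atTop (𝓝 0) := by
  have := tendsto_measure_of_tendsto_indicator_of_isFiniteMeasure (A := ∅) atTop μ
    (fun _ => measurableSet_overshootsOnGrid hmeas ε) fun ω =>
      (eventually_notMem_overshootsOnGrid ht (h0 ω) (hcont ω) hε).mono
        fun _ hn => iff_of_false hn (notMem_empty ω)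
  rwa [measure_empty] at this

end Limits

lemma tendsto_measure_setOf_add_lt {Ω : Type*} [MeasurableSpace Ω] (μ : Measure Ω)
    [IsFiniteMeasure μ] {f : Ω → ℝ} (hf : Measurable f) (x : ℝ) :
    Tendsto (fun δ => μ {ω | x + δ < f ω}) (𝓝[>] 0) (𝓝 (μ {ω | x < f ω})) := by
  refine tendsto_measure_of_tendsto_indicator_of_isFiniteMeasure _ μ
    (fun δ => measurableSet_lt measurable_const hf) fun ω => ?_
  by_cases h : x < f ω
  · filter_upwards [Ioo_mem_nhdsGT (sub_pos.2 h)] with δ hδ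
    exact iff_of_true (show x + δ < f ω by linarith [hδ.2]) h
  · filter_upwards [self_mem_nhdsWithin] with δ (hδ : 0 < δ)
    exact iff_of_false (fun h' : x + δ < f ω => h (by linarith)) h

/-- Reflection principle: for `x > 0`, `t > 0`,
`P(max_{0 ≤ s ≤ t} B(s) > x) = 2 P(B(t) > x)`. -/
theorem reflection_principle {Ω : Type*} [MeasureSpace Ω]
    [IsProbabilityMeasure (volume : Measure Ω)]
    (B : ℝ → Ω → ℝ) (hB : IsStandardBM B) (x t : ℝ) (hx : 0 < x) (ht : 0 < t) :
    volume {ω | x < ⨆ s : Icc (0 : ℝ) t, B s ω} =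
      2 * volume {ω | x < B t ω} := by
  have ⟨h0, hcont, hmeas, _, _⟩ := hB
  have hcross := tendsto_measure_crossesOnGrid volume (x := x) hmeas hcont ht
  refine le_antisymm (le_of_tendsto hcross ((eventually_ne_atTop 0).mono fun n hn =>
    hB.measure_crossesOnGrid_le ht.le hn)) ?_
  have hlower : ∀ δ > 0, volume {ω | x < B t ω} + volume {ω | x + δ < B t ω} ≤
      volume {ω | x < ⨆ s : Icc (0 : ℝ) t, B s ω} := fun δ hδ => by
    have hover := tendsto_measure_overshootsOnGrid volume hmeas hcont
      (fun ω => (h0 ω).trans_le hx.le) ht.le (half_pos hδ)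
    refine ge_of_tendsto (by simpa using hcross.add hover) ((eventually_ne_atTop 0).mono
      fun n hn => ?_)
    simpa [mul_div_cancel₀] using hB.measure_lt_add_measure_lt_le ht.le hn (half_pos hδ).le
  rw [two_mul]
  exact le_of_tendsto ((tendsto_measure_setOf_add_lt volume (hmeas t) x).const_add _)
    (eventually_mem_nhdsWithin.mono hlower)
end
end

section
/- Let X₁, ..., Xₙ be coalescing simple symmetric random walks on ℤ in discrete time started at time 0 from n (ordered) initial positions, observed up to time T, and let η_T be the number of distinct values among X₁(T), ..., Xₙ(T). Then for every k ≥ 1, P(η_T ≥ k+1) ≤ P(η_T ≥ k) · P(η_T ≥ 2). -/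
/-!
Encode the increments on a finite window containing every walker's light cone by the uniformly
random set `σ` of space-time points where they equal `+1`. Walks of equal parity never cross, so
the endpoints are ordered; walks of different parity never meet, and then `η_T ≥ 2` surely.
On `{η_T ≥ k + 1}` there is a unique `q` such that walker `q + 1` is the first to carry the `k`-th
distinct endpoint value (event `A_q`), and it still ends strictly below the last walker
(event `B_q`). The `A_q` are disjoint with union inside `{η_T ≥ k}`, and `B_q ⊆ {η_T ≥ 2}`.
Conditionally on the path of walker `q + 1`, `A_q` depends only on the increments below the path
and `B_q` only on those above it, so they are independent; moreover `A_q` increases and `B_q`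
decreases as the path moves up, and the Harris inequality over the path gives
`P(A_q ∩ B_q) ≤ P(A_q) P(B_q)`. Summing over `q` proves the claim.
-/

open MeasureTheory ProbabilityTheory Set
open scoped ENNReal

noncomputable section

/-- The coalescing system of random walks driven by a field `Δ` of increments:
`walk Δ l ω 0 = l` and `walk Δ l ω (j+1) = walk Δ l ω j + Δ (walk Δ l ω j) j ω`.
Walks driven by the same field automatically coalesce upon meeting. -/
def walk {Ω : Type*} (Δ : ℤ → ℕ → Ω → ℤ) (l : ℤ) (ω : Ω) : ℕ → ℤ
  | 0 => l
  | j + 1 => walk Δ l ω j + Δ (walk Δ l ω j) j ω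

namespace CoalescingWalks

open scoped Finset

section Walk

variable {Ω : Type*} {Δ : ℤ → ℕ → Ω → ℤ} {ω : Ω} {a b : ℤ}

lemma walk_succ (Δ : ℤ → ℕ → Ω → ℤ) (a : ℤ) (ω : Ω) (t : ℕ) :
    walk Δ a ω (t + 1) = walk Δ a ω t + Δ (walk Δ a ω t) t ω := rfl

lemma walk_congr {Ω' : Type*} {Δ' : ℤ → ℕ → Ω' → ℤ} {ω' : Ω'} {T : ℕ}
    (h : ∀ t < T, Δ' (walk Δ a ω t) t ω' = Δ (walk Δ a ω t) t ω) :
    ∀ t ≤ T, walk Δ' a ω' t = walk Δ a ω t := by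
  intro t ht
  induction t with
  | zero => rfl
  | succ t ih => rw [walk_succ, walk_succ, ih (by omega), h t (by omega)]

lemma walk_eq_walk_of_le {t u : ℕ} (h : walk Δ a ω t = walk Δ b ω t) (htu : t ≤ u) :
    walk Δ a ω u = walk Δ b ω u := by
  induction u, htu using Nat.le_induction with
  | base => exact h
  | succ u _ ih => rw [walk_succ, walk_succ, ih]

variable (hΔ : ∀ z j, Δ z j ω = 1 ∨ Δ z j ω = -1)
include hΔ

lemma abs_walk_sub_le (a : ℤ) (t : ℕ) : |walk Δ a ω t - a| ≤ t := by
  induction t with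
  | zero => simp [walk]
  | succ t ih =>
    rw [walk_succ, abs_le] at *
    rcases hΔ (walk Δ a ω t) t with h | h <;> rw [h] <;> push_cast <;> omega

lemma even_walk_sub_sub (a : ℤ) (t : ℕ) : Even (walk Δ a ω t - a - t) := by
  induction t with
  | zero => simp [walk]
  | succ t ih =>
    obtain ⟨c, hc⟩ := ih
    rw [walk_succ]
    rcases hΔ (walk Δ a ω t) t with h | h <;> rw [h]
    · exact ⟨c, by push_cast; omega⟩
    · exact ⟨c - 1, by push_cast; omega⟩

lemma walk_le_walk (hab : a ≤ b) (he : Even (b - a)) (t : ℕ) :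
    walk Δ a ω t ≤ walk Δ b ω t := by
  induction t with
  | zero => exact hab
  | succ t ih =>
    have hpar : Even (walk Δ b ω t - walk Δ a ω t) := by
      obtain ⟨c, hc⟩ := even_walk_sub_sub hΔ a t
      obtain ⟨d, hd⟩ := even_walk_sub_sub hΔ b t
      obtain ⟨e, he⟩ := he
      exact ⟨d - c + e, by omega⟩
    rcases ih.eq_or_lt with h | h
    · rw [walk_succ, walk_succ, h]
    · obtain ⟨c, hc⟩ := hpar
      rw [walk_succ, walk_succ]
      rcases hΔ (walk Δ a ω t) t with ha | ha <;> rcases hΔ (walk Δ b ω t) t with hb | hb <;>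
        omega

lemma walk_ne_walk_of_not_even (h : ¬ Even (b - a)) (t : ℕ) : walk Δ a ω t ≠ walk Δ b ω t := by
  intro hab
  obtain ⟨c, hc⟩ := even_walk_sub_sub hΔ a t
  obtain ⟨d, hd⟩ := even_walk_sub_sub hΔ b t
  exact h ⟨c - d, by omega⟩

lemma walk_lt_walk_iff (hab : a ≤ b) (he : Even (b - a)) (T : ℕ) :
    walk Δ a ω T < walk Δ b ω T ↔ ∀ t ≤ T, walk Δ a ω t < walk Δ b ω t := by
  refine ⟨fun hT t ht => ?_, fun h => h T le_rfl⟩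
  refine (walk_le_walk hΔ hab he t).lt_of_ne fun h => ?_
  exact hT.ne (walk_eq_walk_of_le h ht)

end Walk

section SetFamily

variable {α : Type*} [DecidableEq α] {W P Q : Finset α} {𝒜 ℬ : Finset (Finset α)}

def IsDeterminedBy (W P : Finset α) (𝒜 : Finset (Finset α)) : Prop :=
  ∀ σ ⊆ W, ∀ τ ⊆ W, σ ∩ P = τ ∩ P → (σ ∈ 𝒜 ↔ τ ∈ 𝒜)

lemma IsDeterminedBy.of_imp (h : ∀ σ ⊆ W, ∀ τ ⊆ W, σ ∩ P = τ ∩ P → σ ∈ 𝒜 → τ ∈ 𝒜) :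
    IsDeterminedBy W P 𝒜 :=
  fun σ hσ τ hτ hστ => ⟨h σ hσ τ hτ hστ, h τ hτ σ hσ hστ.symm⟩

lemma IsDeterminedBy.mono (hA : IsDeterminedBy W P 𝒜) (hPQ : P ⊆ Q) : IsDeterminedBy W Q 𝒜 :=
  fun σ hσ τ hτ h => hA σ hσ τ hτ <| by
    rw [← Finset.inter_eq_right.2 hPQ, ← Finset.inter_assoc, h, Finset.inter_assoc]

lemma IsDeterminedBy.inter (hA : IsDeterminedBy W P 𝒜) (hB : IsDeterminedBy W Q ℬ) :
    IsDeterminedBy W (P ∪ Q) (𝒜 ∩ ℬ) := by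
  intro σ hσ τ hτ h
  simp only [Finset.mem_inter, hA.mono Finset.subset_union_left σ hσ τ hτ h,
    hB.mono Finset.subset_union_right σ hσ τ hτ h]

def splice (P σ τ : Finset α) : Finset α := σ ∩ P ∪ τ \ P

lemma splice_subset {σ τ : Finset α} (hσ : σ ⊆ W) (hτ : τ ⊆ W) : splice P σ τ ⊆ W :=
  Finset.union_subset (Finset.inter_subset_left.trans hσ) (Finset.sdiff_subset.trans hτ)

lemma splice_inter_self (σ τ : Finset α) : splice P σ τ ∩ P = σ ∩ P := by
  ext; simp only [splice, Finset.mem_inter, Finset.mem_union, Finset.mem_sdiff]; tauto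

lemma splice_inter_of_disjoint (hPQ : Disjoint P Q) (σ τ : Finset α) :
    splice P σ τ ∩ Q = τ ∩ Q := by
  ext x
  have : x ∈ P → x ∉ Q := fun h => Finset.disjoint_left.1 hPQ h
  simp only [splice, Finset.mem_inter, Finset.mem_union, Finset.mem_sdiff]
  tauto

lemma splice_splice (σ τ : Finset α) : splice P (splice P σ τ) (splice P τ σ) = σ := by
  ext; simp only [splice, Finset.mem_inter, Finset.mem_union, Finset.mem_sdiff]; tauto

/-- Events determined by disjoint sets of coordinates are independent under the uniform measure
on subsets of `W`; the bijection swaps the `P`-coordinates of a pair of configurations. -/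
theorem card_inter_mul_two_pow (h𝒜 : 𝒜 ⊆ W.powerset) (hℬ : ℬ ⊆ W.powerset)
    (hA : IsDeterminedBy W P 𝒜) (hB : IsDeterminedBy W Q ℬ) (hPQ : Disjoint P Q) :
    #(𝒜 ∩ ℬ) * 2 ^ #W = #𝒜 * #ℬ := by
  rw [← Finset.card_powerset, ← Finset.card_product, ← Finset.card_product]
  let swap : Finset α × Finset α → Finset α × Finset α :=
    fun p => (splice P p.1 p.2, splice P p.2 p.1)
  have hswap : ∀ p, swap (swap p) = p := fun p => Prod.ext (splice_splice _ _) (splice_splice _ _)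
  refine Finset.card_nbij' swap swap ?_ ?_ (fun p _ => hswap p) (fun p _ => hswap p)
  · rintro ⟨σ, τ⟩ hστ
    simp only [Finset.coe_product, Finset.coe_inter, Set.mem_prod, Set.mem_inter_iff,
      Finset.mem_coe, Finset.mem_powerset] at hστ ⊢
    obtain ⟨⟨hσA, hσB⟩, hτ⟩ := hστ
    have hσ := Finset.mem_powerset.1 (h𝒜 hσA)
    exact ⟨(hA _ (splice_subset hσ hτ) _ hσ (splice_inter_self σ τ)).2 hσA,
      (hB _ (splice_subset hτ hσ) _ hσ (splice_inter_of_disjoint hPQ τ σ)).2 hσB⟩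
  · rintro ⟨σ, τ⟩ hστ
    simp only [Finset.coe_product, Finset.coe_inter, Set.mem_prod, Set.mem_inter_iff,
      Finset.mem_coe, Finset.mem_powerset] at hστ ⊢
    obtain ⟨hσA, hτB⟩ := hστ
    have hσ := Finset.mem_powerset.1 (h𝒜 hσA)
    have hτ := Finset.mem_powerset.1 (hℬ hτB)
    exact ⟨⟨(hA _ (splice_subset hσ hτ) _ hσ (splice_inter_self σ τ)).2 hσA,
      (hB _ (splice_subset hσ hτ) _ hτ (splice_inter_of_disjoint hPQ σ τ)).2 hτB⟩,
      splice_subset hτ hσ⟩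

lemma card_filter_inter_eq (hPW : P ⊆ W) {ρ : Finset α} (hρ : ρ ⊆ P) :
    #{σ ∈ W.powerset | σ ∩ P = ρ} = 2 ^ (#W - #P) := by
  rw [← Finset.card_sdiff_of_subset hPW, ← Finset.card_powerset]
  refine Finset.card_nbij' (· \ P) (· ∪ ρ) ?_ ?_ ?_ ?_ <;> intro σ hσ <;>
    simp only [Finset.coe_filter, Finset.coe_powerset, Set.mem_preimage, Set.mem_powerset_iff,
      Finset.coe_subset, Finset.mem_powerset, Set.mem_ofPred_eq] at hσ ⊢
  · exact Finset.sdiff_subset_sdiff hσ.1 le_rfl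
  · refine ⟨Finset.union_subset (hσ.trans Finset.sdiff_subset) (hρ.trans hPW), ?_⟩
    ext x
    have := @hσ x
    have := @hρ x
    simp only [Finset.mem_inter, Finset.mem_union, Finset.mem_sdiff] at *
    tauto
  · ext x
    have := Finset.ext_iff.1 hσ.2 x
    simp only [Finset.mem_inter, Finset.mem_union, Finset.mem_sdiff] at *
    tauto
  · ext x
    have := @hσ x
    have := @hρ x
    simp only [Finset.mem_union, Finset.mem_sdiff] at *
    tauto

lemma isDeterminedBy_filter_inter_eq (C ρ : Finset α) :
    IsDeterminedBy W C {σ ∈ W.powerset | σ ∩ C = ρ} := by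
  intro σ hσ τ hτ h
  simp only [Finset.mem_filter, Finset.mem_powerset, hσ, hτ, h, true_and]

/-- Conditioning on the trace of the configuration on `C` does not change the probability of an
event determined by coordinates outside `C`. -/
lemma card_inter_filter_inter_eq_mul_two_pow {C ρ : Finset α} (h𝒜 : 𝒜 ⊆ W.powerset)
    (hA : IsDeterminedBy W P 𝒜) (hPC : Disjoint P C) (hCW : C ⊆ W) (hρ : ρ ⊆ C) :
    #(𝒜 ∩ {σ ∈ W.powerset | σ ∩ C = ρ}) * 2 ^ #C = #𝒜 := by
  have h := card_inter_mul_two_pow h𝒜 (Finset.filter_subset _ _) hA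
    (isDeterminedBy_filter_inter_eq C ρ) hPC
  have hW : 2 ^ #W = 2 ^ #C * 2 ^ (#W - #C) := by
    rw [← pow_add, Nat.add_sub_cancel' (Finset.card_le_card hCW)]
  rw [card_filter_inter_eq hCW hρ, hW, ← mul_assoc] at h
  exact Nat.eq_of_mul_eq_mul_right (by positivity) h

/-- The Harris inequality, as a case of the four functions theorem. -/
theorem two_pow_mul_sum_mul_le (U : Finset α) {f g : Finset α → ℕ}
    (hf : MonotoneOn f U.powerset) (hg : AntitoneOn g U.powerset) :
    2 ^ #U * ∑ s ∈ U.powerset, f s * g s ≤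
      (∑ s ∈ U.powerset, f s) * ∑ s ∈ U.powerset, g s := by
  have := U.four_functions_theorem (f₁ := fun s => f s * g s) (f₂ := 1) (f₃ := g) (f₄ := f)
    (fun _ => Nat.zero_le _) (fun _ => Nat.zero_le _) (fun _ => Nat.zero_le _)
    (fun _ => Nat.zero_le _) ?_ subset_rfl subset_rfl
  · simpa [mul_comm] using this
  intro s hs t ht
  have hst : s ∩ t ∈ U.powerset := Finset.mem_powerset.2 (Finset.inter_subset_left.trans hs)
  have hsut : s ∪ t ∈ U.powerset := Finset.mem_powerset.2 (Finset.union_subset hs ht)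
  rw [Pi.one_apply, mul_one, mul_comm]
  exact Nat.mul_le_mul (hg hst (Finset.mem_powerset.2 hs) Finset.inter_subset_left)
    (hf (Finset.mem_powerset.2 hs) hsut Finset.subset_union_left)

end SetFamily

section DistinctValues

variable {β : Type*} [DecidableEq β] {e : ℕ → β} {m n : ℕ}

def numDistinct (e : ℕ → β) (m : ℕ) : ℕ := #((Finset.range m).image e)

lemma numDistinct_mono : Monotone (numDistinct e) := fun _ _ h =>
  Finset.card_le_card (Finset.image_subset_image (Finset.range_subset_range.2 h))

lemma numDistinct_le (e : ℕ → β) (m : ℕ) : numDistinct e m ≤ m :=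
  Finset.card_image_le.trans (Finset.card_range m).le

lemma numDistinct_pos (hm : 0 < m) : 0 < numDistinct e m :=
  Finset.card_pos.2 ((Finset.nonempty_range_iff.2 hm.ne').image e)

lemma two_le_numDistinct {i j : ℕ} (hi : i < m) (hj : j < m) (h : e i ≠ e j) :
    2 ≤ numDistinct e m :=
  Finset.one_lt_card.2 ⟨e i, Finset.mem_image_of_mem e (Finset.mem_range.2 hi),
    e j, Finset.mem_image_of_mem e (Finset.mem_range.2 hj), h⟩

lemma numDistinct_congr {e' : ℕ → β} (h : ∀ i < m, e i = e' i) :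
    numDistinct e m = numDistinct e' m :=
  congrArg Finset.card (Finset.image_congr fun i hi => h i (Finset.mem_range.1 hi))

variable [LinearOrder β] (he : Monotone e)
include he

lemma numDistinct_add_two (m : ℕ) :
    numDistinct e (m + 2) = numDistinct e (m + 1) + if e m < e (m + 1) then 1 else 0 := by
  have hmem : e (m + 1) ∈ (Finset.range (m + 1)).image e ↔ ¬ e m < e (m + 1) := by
    simp only [Finset.mem_image, Finset.mem_range, not_lt]
    constructor
    · rintro ⟨i, hi, hie⟩
      exact hie ▸ he (Nat.lt_succ_iff.1 hi)
    · exact fun h => ⟨m, m.lt_succ_self, le_antisymm (he m.le_succ) h⟩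
  rw [numDistinct, numDistinct, Finset.range_add_one, Finset.image_insert]
  split_ifs with h
  · exact Finset.card_insert_of_notMem (hmem.not.2 (not_not.2 h))
  · rw [Finset.insert_eq_of_mem (hmem.2 h), add_zero]

lemma numDistinct_le_of_le {p : ℕ} (h : e (n - 1) ≤ e p) :
    numDistinct e n ≤ numDistinct e (p + 1) := by
  refine Finset.card_le_card fun x hx => ?_
  obtain ⟨i, hi, rfl⟩ := Finset.mem_image.1 hx
  rw [Finset.mem_range] at hi
  rcases le_or_gt i p with hip | hpi
  · exact Finset.mem_image_of_mem e (Finset.mem_range.2 (by omega))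
  · refine Finset.mem_image.2 ⟨p, Finset.mem_range.2 p.lt_succ_self, ?_⟩
    exact le_antisymm (he hpi.le) ((he (by omega : i ≤ n - 1)).trans h)

lemma exists_jump {k : ℕ} (hk : 2 ≤ k) (h : k + 1 ≤ numDistinct e n) :
    ∃ q, q + 2 < n ∧ numDistinct e (q + 1) + 1 = k ∧ e q < e (q + 1) ∧
      e (q + 1) < e (n - 1) := by
  classical
  have hex : ∃ m, k ≤ numDistinct e m := ⟨n, by omega⟩
  obtain ⟨q, hq⟩ : ∃ q, Nat.find hex = q + 2 := by
    have := numDistinct_le e (Nat.find hex)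
    have := Nat.find_spec hex
    exact ⟨Nat.find hex - 2, by omega⟩
  have hk2 : k ≤ numDistinct e (q + 2) := hq ▸ Nat.find_spec hex
  have hk1 : numDistinct e (q + 1) < k := not_le.1 (Nat.find_min hex (by omega))
  have hjump : e q < e (q + 1) := by
    by_contra hc
    have := numDistinct_add_two he q
    rw [if_neg hc] at this
    omega
  have hstep : numDistinct e (q + 2) = numDistinct e (q + 1) + 1 := by
    rw [numDistinct_add_two he q, if_pos hjump]
  have hqn : q + 2 < n := by
    have := hq ▸ Nat.find_min' hex (show k ≤ numDistinct e n by omega)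
    rcases this.lt_or_eq with hlt | heq
    · exact hlt
    · rw [← heq] at h
      omega
  refine ⟨q, hqn, by omega, hjump, lt_of_not_ge fun hle => ?_⟩
  have : numDistinct e n ≤ numDistinct e (q + 2) := numDistinct_le_of_le he hle
  omega

end DistinctValues

section PathConditioning

/-- A configuration `σ`, a finite set of space-time points, encodes the `±1` field stepping up
exactly at the points of `σ`. -/
def configStep (z : ℤ) (j : ℕ) (σ : Finset (ℤ × ℕ)) : ℤ := if (z, j) ∈ σ then 1 else -1

/-- The paths of a single walker are the walks of this field, indexed by their up-times `s`. -/
def timeStep (_ : ℤ) (j : ℕ) (s : Finset ℕ) : ℤ := if j ∈ s then 1 else -1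

lemma configStep_eq_one_or (σ : Finset (ℤ × ℕ)) (z : ℤ) (j : ℕ) :
    configStep z j σ = 1 ∨ configStep z j σ = -1 := by
  unfold configStep; split_ifs <;> simp

lemma timeStep_eq_one_or (s : Finset ℕ) (z : ℤ) (j : ℕ) :
    timeStep z j s = 1 ∨ timeStep z j s = -1 := by
  unfold timeStep; split_ifs <;> simp

variable {T : ℕ} {a : ℤ} {W σ τ : Finset (ℤ × ℕ)} {s s' : Finset ℕ}

lemma walk_timeStep_mono (h : s ⊆ s') (t : ℕ) : walk timeStep a s t ≤ walk timeStep a s' t := by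
  induction t with
  | zero => exact le_rfl
  | succ t ih =>
    have hstep : timeStep 0 t s ≤ timeStep 0 t s' := by
      unfold timeStep
      by_cases ht : t ∈ s
      · simp [ht, h ht]
      · rw [if_neg ht]; split_ifs <;> norm_num
    exact add_le_add ih hstep

def lightCone (T : ℕ) (a : ℤ) : Set (ℤ × ℕ) := {w | w.2 < T ∧ |w.1 - a| ≤ w.2}

lemma walk_mem_lightCone {Ω : Type*} {Δ : ℤ → ℕ → Ω → ℤ} {ω : Ω}
    (hΔ : ∀ z j, Δ z j ω = 1 ∨ Δ z j ω = -1) {t : ℕ} (ht : t < T) :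
    (walk Δ a ω t, t) ∈ lightCone T a :=
  ⟨ht, abs_walk_sub_le hΔ a t⟩

def upTimes (T : ℕ) (a : ℤ) (σ : Finset (ℤ × ℕ)) : Finset ℕ :=
  {t ∈ Finset.range T | (walk configStep a σ t, t) ∈ σ}

def pathPoints (T : ℕ) (a : ℤ) (s : Finset ℕ) : Finset (ℤ × ℕ) :=
  (Finset.range T).image fun t => (walk timeStep a s t, t)

def upPoints (a : ℤ) (s : Finset ℕ) : Finset (ℤ × ℕ) :=
  s.image fun t => (walk timeStep a s t, t)

lemma mem_upPoints {t : ℕ} : (walk timeStep a s t, t) ∈ upPoints a s ↔ t ∈ s := by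
  simp only [upPoints, Finset.mem_image, Prod.mk.injEq]
  exact ⟨fun ⟨t', ht', _, htt'⟩ => htt' ▸ ht', fun ht => ⟨t, ht, rfl, rfl⟩⟩

lemma upPoints_subset_pathPoints (hs : s ⊆ Finset.range T) : upPoints a s ⊆ pathPoints T a s :=
  Finset.image_subset_image hs

lemma card_pathPoints : #(pathPoints T a s) = T := by
  rw [pathPoints, Finset.card_image_of_injective _ fun _ _ h => congrArg Prod.snd h,
    Finset.card_range]

lemma pathPoints_subset (hW : lightCone T a ⊆ W) : pathPoints T a s ⊆ W := by
  intro w hw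
  obtain ⟨t, ht, rfl⟩ := Finset.mem_image.1 hw
  exact hW (walk_mem_lightCone (timeStep_eq_one_or s) (Finset.mem_range.1 ht))

lemma walk_timeStep_upTimes : ∀ t ≤ T, walk timeStep a (upTimes T a σ) t = walk configStep a σ t :=
  walk_congr fun t ht => by
    simp only [timeStep, configStep, upTimes, Finset.mem_filter, Finset.mem_range, ht, true_and]

lemma upTimes_eq_iff (hs : s ⊆ Finset.range T) :
    upTimes T a σ = s ↔ ∀ t < T, ((walk timeStep a s t, t) ∈ σ ↔ t ∈ s) := by
  constructor
  · rintro rfl t ht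
    rw [walk_timeStep_upTimes t ht.le]
    simp [upTimes, ht]
  · intro h
    have hwalk : ∀ t ≤ T, walk configStep a σ t = walk timeStep a s t :=
      walk_congr fun t ht => by simp only [configStep, timeStep, h t ht]
    ext t
    simp only [upTimes, Finset.mem_filter, Finset.mem_range]
    constructor
    · rintro ⟨ht, hσ⟩
      rwa [hwalk t ht.le, h t ht] at hσ
    · intro hts
      have ht := Finset.mem_range.1 (hs hts)
      rw [hwalk t ht.le]
      exact ⟨ht, (h t ht).2 hts⟩

lemma inter_pathPoints_eq_iff (hs : s ⊆ Finset.range T) :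
    σ ∩ pathPoints T a s = upPoints a s ↔ ∀ t < T, ((walk timeStep a s t, t) ∈ σ ↔ t ∈ s) := by
  have hpath : ∀ t < T, (walk timeStep a s t, t) ∈ pathPoints T a s := fun t ht =>
    Finset.mem_image_of_mem _ (Finset.mem_range.2 ht)
  constructor
  · intro h t ht
    rw [← mem_upPoints, ← h, Finset.mem_inter, and_iff_left (hpath t ht)]
  · intro h
    ext w
    rw [Finset.mem_inter]
    constructor
    · rintro ⟨hwσ, hw⟩
      obtain ⟨t, ht, rfl⟩ := Finset.mem_image.1 hw
      exact mem_upPoints.2 ((h t (Finset.mem_range.1 ht)).1 hwσ)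
    · intro hw
      obtain ⟨t, hts, rfl⟩ := Finset.mem_image.1 hw
      have ht := Finset.mem_range.1 (hs hts)
      exact ⟨(h t ht).2 hts, hpath t ht⟩

/-- Total probability, conditioning on the path of the walk from `a`: the path has `2 ^ T`
equally likely values, and given it the event `𝒳` becomes an event `𝒴 s` independent of it. -/
theorem card_mul_two_pow_eq_sum {𝒳 : Finset (Finset (ℤ × ℕ))}
    {𝒴 : Finset ℕ → Finset (Finset (ℤ × ℕ))} {P : Finset ℕ → Finset (ℤ × ℕ)}
    (hW : lightCone T a ⊆ W) (h𝒴W : ∀ s, 𝒴 s ⊆ W.powerset)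
    (h𝒴P : ∀ s, IsDeterminedBy W (P s) (𝒴 s)) (hP : ∀ s, Disjoint (P s) (pathPoints T a s))
    (h𝒳𝒴 : ∀ σ ∈ W.powerset, σ ∈ 𝒳 ↔ σ ∈ 𝒴 (upTimes T a σ)) (h𝒳 : 𝒳 ⊆ W.powerset) :
    #𝒳 * 2 ^ T = ∑ s ∈ (Finset.range T).powerset, #(𝒴 s) := by
  rw [Finset.card_eq_sum_card_fiberwise (f := upTimes T a) (t := (Finset.range T).powerset)
    fun σ _ => Finset.mem_powerset.2 (Finset.filter_subset _ _), Finset.sum_mul]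
  refine Finset.sum_congr rfl fun s hs => ?_
  have hs := Finset.mem_powerset.1 hs
  have hfiber : {σ ∈ 𝒳 | upTimes T a σ = s} =
      𝒴 s ∩ {σ ∈ W.powerset | σ ∩ pathPoints T a s = upPoints a s} := by
    ext σ
    simp only [Finset.mem_filter, Finset.mem_inter, inter_pathPoints_eq_iff hs,
      ← upTimes_eq_iff hs]
    constructor
    · rintro ⟨hσ, rfl⟩
      exact ⟨(h𝒳𝒴 σ (h𝒳 hσ)).1 hσ, h𝒳 hσ, rfl⟩
    · rintro ⟨hσ, hσW, rfl⟩
      exact ⟨(h𝒳𝒴 σ hσW).2 hσ, rfl⟩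
  have := card_inter_filter_inter_eq_mul_two_pow (h𝒴W s) (h𝒴P s) (hP s) (pathPoints_subset hW)
    (upPoints_subset_pathPoints hs)
  rwa [card_pathPoints, ← hfiber] at this

lemma walk_configStep_eq_of_inter_filter_eq {p : ℤ × ℕ → Prop} [DecidablePred p]
    (hσ : σ ⊆ W) (hτ : τ ⊆ W) (h : σ ∩ W.filter p = τ ∩ W.filter p)
    (hp : ∀ t < T, p (walk configStep a σ t, t)) :
    ∀ t ≤ T, walk configStep a τ t = walk configStep a σ t := by
  refine walk_congr fun t ht => ?_
  have hmem : ∀ w, p w → (w ∈ τ ↔ w ∈ σ) := fun w hw => by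
    have := Finset.ext_iff.1 h w
    simp only [Finset.mem_inter, Finset.mem_filter] at this
    exact ⟨fun hτw => (this.2 ⟨hτw, hτ hτw, hw⟩).1, fun hσw => (this.1 ⟨hσw, hσ hσw, hw⟩).1⟩
  simp only [configStep, hmem _ (hp t ht)]

variable (W) in
def belowPath (a : ℤ) (s : Finset ℕ) : Finset (ℤ × ℕ) :=
  W.filter fun w => w.1 < walk timeStep a s w.2

variable (W) in
def abovePath (a : ℤ) (s : Finset ℕ) : Finset (ℤ × ℕ) :=
  W.filter fun w => walk timeStep a s w.2 < w.1

lemma disjoint_belowPath_abovePath : Disjoint (belowPath W a s) (abovePath W a s) := by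
  rw [Finset.disjoint_left]
  intro w hb ha
  simp only [belowPath, abovePath, Finset.mem_filter] at hb ha
  omega

lemma disjoint_pathPoints {P : Finset (ℤ × ℕ)}
    (hP : ∀ w ∈ P, w.1 ≠ walk timeStep a s w.2) : Disjoint P (pathPoints T a s) := by
  rw [Finset.disjoint_right]
  intro w hw hwP
  obtain ⟨t, -, rfl⟩ := Finset.mem_image.1 hw
  exact hP _ hwP rfl

lemma disjoint_belowPath_pathPoints : Disjoint (belowPath W a s) (pathPoints T a s) :=
  disjoint_pathPoints fun _ hw => (Finset.mem_filter.1 hw).2.ne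

lemma disjoint_abovePath_pathPoints : Disjoint (abovePath W a s) (pathPoints T a s) :=
  disjoint_pathPoints fun _ hw => (Finset.mem_filter.1 hw).2.ne'

end PathConditioning

section Events

variable (T : ℕ) (L : ℕ → ℤ) (W : Finset (ℤ × ℕ))

def endpoint (σ : Finset (ℤ × ℕ)) (i : ℕ) : ℤ := walk configStep (L i) σ T

/-- The `k`-th smallest endpoint value is first taken by walker `q + 1`. -/
def jumpAt (k q : ℕ) : Finset (Finset (ℤ × ℕ)) :=
  {σ ∈ W.powerset | numDistinct (endpoint T L σ) (q + 1) + 1 = k ∧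
    endpoint T L σ q < endpoint T L σ (q + 1)}

def endpointLt (i j : ℕ) : Finset (Finset (ℤ × ℕ)) :=
  {σ ∈ W.powerset | endpoint T L σ i < endpoint T L σ j}

/-- `jumpAt k q` given that walker `q + 1` follows the path with up-times `s`. -/
def jumpAtGiven (k q : ℕ) (s : Finset ℕ) : Finset (Finset (ℤ × ℕ)) :=
  {σ ∈ W.powerset | numDistinct (endpoint T L σ) (q + 1) + 1 = k ∧
    ∀ t ≤ T, walk configStep (L q) σ t < walk timeStep (L (q + 1)) s t}

/-- `endpointLt (q + 1) j` given that walker `q + 1` follows the path with up-times `s`. -/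
def endpointLtGiven (q j : ℕ) (s : Finset ℕ) : Finset (Finset (ℤ × ℕ)) :=
  {σ ∈ W.powerset | ∀ t ≤ T, walk timeStep (L (q + 1)) s t < walk configStep (L j) σ t}

variable {T L W} {σ : Finset (ℤ × ℕ)} {k q j : ℕ}
variable (hL : Monotone L) (heven : ∀ i j, Even (L i - L j))
include hL heven

lemma walk_configStep_le {i j : ℕ} (hij : i ≤ j) (t : ℕ) :
    walk configStep (L i) σ t ≤ walk configStep (L j) σ t :=
  walk_le_walk (configStep_eq_one_or σ) (hL hij) (heven j i) t

lemma endpoint_mono : Monotone (endpoint T L σ) := fun _ _ hij => walk_configStep_le hL heven hij T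

lemma mem_jumpAt_iff (hσ : σ ∈ W.powerset) :
    σ ∈ jumpAt T L W k q ↔ σ ∈ jumpAtGiven T L W k q (upTimes T (L (q + 1)) σ) := by
  simp only [jumpAt, jumpAtGiven, Finset.mem_filter, hσ, true_and]
  rw [endpoint, endpoint, walk_lt_walk_iff (configStep_eq_one_or σ) (hL q.le_succ) (heven _ _)]
  refine and_congr_right fun _ => forall₂_congr fun t ht => ?_
  rw [walk_timeStep_upTimes t ht]

lemma mem_endpointLt_iff (hqj : q + 1 ≤ j) (hσ : σ ∈ W.powerset) :
    σ ∈ endpointLt T L W (q + 1) j ↔ σ ∈ endpointLtGiven T L W q j (upTimes T (L (q + 1)) σ) := by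
  simp only [endpointLt, endpointLtGiven, Finset.mem_filter, hσ, true_and]
  rw [endpoint, endpoint, walk_lt_walk_iff (configStep_eq_one_or σ) (hL hqj) (heven _ _)]
  refine forall₂_congr fun t ht => ?_
  rw [walk_timeStep_upTimes t ht]

lemma isDeterminedBy_jumpAtGiven (s : Finset ℕ) :
    IsDeterminedBy W (belowPath W (L (q + 1)) s) (jumpAtGiven T L W k q s) := by
  refine IsDeterminedBy.of_imp fun σ hσ τ hτ h hστ => ?_
  simp only [jumpAtGiven, Finset.mem_filter, Finset.mem_powerset] at hστ ⊢
  obtain ⟨-, hcount, hbelow⟩ := hστ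
  have hsame : ∀ i ≤ q, ∀ t ≤ T, walk configStep (L i) τ t = walk configStep (L i) σ t :=
    fun i hi => walk_configStep_eq_of_inter_filter_eq hσ hτ h fun t ht =>
      (walk_configStep_le hL heven hi t).trans_lt (hbelow t ht.le)
  refine ⟨hτ, ?_, fun t ht => hsame q le_rfl t ht ▸ hbelow t ht⟩
  rw [← hcount, numDistinct_congr (e := endpoint T L τ) (e' := endpoint T L σ)
    (m := q + 1) fun i hi => hsame i (by omega) T le_rfl]

omit hL heven in
lemma isDeterminedBy_endpointLtGiven (s : Finset ℕ) :
    IsDeterminedBy W (abovePath W (L (q + 1)) s) (endpointLtGiven T L W q j s) := by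
  refine IsDeterminedBy.of_imp fun σ hσ τ hτ h hστ => ?_
  simp only [endpointLtGiven, Finset.mem_filter, Finset.mem_powerset] at hστ ⊢
  obtain ⟨-, habove⟩ := hστ
  have hsame := walk_configStep_eq_of_inter_filter_eq hσ hτ h fun t ht => habove t ht.le
  exact ⟨hτ, fun t ht => hsame t ht ▸ habove t ht⟩

omit hL heven in
lemma jumpAtGiven_mono : Monotone (jumpAtGiven T L W k q) := fun _ _ hss σ hσ => by
  simp only [jumpAtGiven, Finset.mem_filter] at hσ ⊢
  exact ⟨hσ.1, hσ.2.1, fun t ht => (hσ.2.2 t ht).trans_le (walk_timeStep_mono hss t)⟩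

omit hL heven in
lemma endpointLtGiven_anti : Antitone (endpointLtGiven T L W q j) := fun _ _ hss σ hσ => by
  simp only [endpointLtGiven, Finset.mem_filter] at hσ ⊢
  exact ⟨hσ.1, fun t ht => (walk_timeStep_mono hss t).trans_lt (hσ.2 t ht)⟩

lemma card_jumpAt_mul_two_pow (hW : lightCone T (L (q + 1)) ⊆ W) :
    #(jumpAt T L W k q) * 2 ^ T = ∑ s ∈ (Finset.range T).powerset, #(jumpAtGiven T L W k q s) :=
  card_mul_two_pow_eq_sum hW (fun _ => Finset.filter_subset _ _)
    (isDeterminedBy_jumpAtGiven hL heven) (fun _ => disjoint_belowPath_pathPoints)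
    (fun _ hσ => mem_jumpAt_iff hL heven hσ) (Finset.filter_subset _ _)

lemma card_endpointLt_mul_two_pow (hW : lightCone T (L (q + 1)) ⊆ W) (hqj : q + 1 ≤ j) :
    #(endpointLt T L W (q + 1) j) * 2 ^ T =
      ∑ s ∈ (Finset.range T).powerset, #(endpointLtGiven T L W q j s) :=
  card_mul_two_pow_eq_sum hW (fun _ => Finset.filter_subset _ _) isDeterminedBy_endpointLtGiven
    (fun _ => disjoint_abovePath_pathPoints) (fun _ hσ => mem_endpointLt_iff hL heven hqj hσ)
    (Finset.filter_subset _ _)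

/-- Given the path of walker `q + 1`, the two events depend on the configuration on the disjoint
regions below and above the path, hence are independent. -/
lemma card_jumpAt_inter_endpointLt_mul_two_pow (hW : lightCone T (L (q + 1)) ⊆ W)
    (hqj : q + 1 ≤ j) :
    #(jumpAt T L W k q ∩ endpointLt T L W (q + 1) j) * 2 ^ T * 2 ^ #W =
      ∑ s ∈ (Finset.range T).powerset,
        #(jumpAtGiven T L W k q s) * #(endpointLtGiven T L W q j s) := by
  rw [card_mul_two_pow_eq_sum (𝒳 := jumpAt T L W k q ∩ endpointLt T L W (q + 1) j)
    (𝒴 := fun s => jumpAtGiven T L W k q s ∩ endpointLtGiven T L W q j s) hW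
    (fun _ => Finset.inter_subset_left.trans (Finset.filter_subset _ _))
    (fun s => (isDeterminedBy_jumpAtGiven hL heven s).inter (isDeterminedBy_endpointLtGiven s))
    (fun _ => Finset.disjoint_union_left.2
      ⟨disjoint_belowPath_pathPoints, disjoint_abovePath_pathPoints⟩)
    (fun σ hσ => by
      rw [Finset.mem_inter, Finset.mem_inter, mem_jumpAt_iff hL heven hσ,
        mem_endpointLt_iff hL heven hqj hσ])
    (Finset.inter_subset_left.trans (Finset.filter_subset _ _)), Finset.sum_mul]
  exact Finset.sum_congr rfl fun s _ =>
    card_inter_mul_two_pow (Finset.filter_subset _ _) (Finset.filter_subset _ _)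
      (isDeterminedBy_jumpAtGiven hL heven s) (isDeterminedBy_endpointLtGiven s)
      disjoint_belowPath_abovePath

/-- `jumpAtGiven` increases and `endpointLtGiven` decreases with the path, so the Harris
inequality over the path gives negative correlation. -/
theorem card_jumpAt_inter_endpointLt_le (hW : lightCone T (L (q + 1)) ⊆ W) (hqj : q + 1 ≤ j) :
    #(jumpAt T L W k q ∩ endpointLt T L W (q + 1) j) * 2 ^ #W ≤
      #(jumpAt T L W k q) * #(endpointLt T L W (q + 1) j) := by
  have harris := two_pow_mul_sum_mul_le (Finset.range T)
    (f := fun s => #(jumpAtGiven T L W k q s)) (g := fun s => #(endpointLtGiven T L W q j s))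
    (fun _ _ _ _ hst => Finset.card_le_card (jumpAtGiven_mono hst))
    (fun _ _ _ _ hst => Finset.card_le_card (endpointLtGiven_anti hst))
  rw [Finset.card_range, ← card_jumpAt_inter_endpointLt_mul_two_pow hL heven hW hqj,
    ← card_jumpAt_mul_two_pow hL heven hW, ← card_endpointLt_mul_two_pow hL heven hW hqj] at harris
  refine Nat.le_of_mul_le_mul_right (c := 2 ^ T * 2 ^ T) ?_ (by positivity)
  linarith

variable (T L W) in
def distinctAtLeast (n m : ℕ) : Finset (Finset (ℤ × ℕ)) :=
  {σ ∈ W.powerset | m ≤ numDistinct (endpoint T L σ) n}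

lemma distinctAtLeast_subset_biUnion {n : ℕ} (hk : 2 ≤ k) :
    distinctAtLeast T L W n (k + 1) ⊆ (Finset.range (n - 2)).biUnion fun q =>
      jumpAt T L W k q ∩ endpointLt T L W (q + 1) (n - 1) := by
  intro σ hσ
  obtain ⟨hσW, hσ⟩ := Finset.mem_filter.1 hσ
  obtain ⟨q, hqn, hcount, hjump, hlast⟩ := exists_jump (endpoint_mono hL heven) hk hσ
  exact Finset.mem_biUnion.2 ⟨q, Finset.mem_range.2 (by omega),
    Finset.mem_inter.2 ⟨Finset.mem_filter.2 ⟨hσW, hcount, hjump⟩, Finset.mem_filter.2 ⟨hσW, hlast⟩⟩⟩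

omit hL heven in
lemma endpointLt_subset_distinctAtLeast {n i : ℕ} (hi : i < n) :
    endpointLt T L W i (n - 1) ⊆ distinctAtLeast T L W n 2 := fun σ hσ => by
  obtain ⟨hσW, hlt⟩ := Finset.mem_filter.1 hσ
  exact Finset.mem_filter.2 ⟨hσW, two_le_numDistinct hi (by omega) hlt.ne⟩

lemma numDistinct_add_two_of_mem_jumpAt (hσ : σ ∈ jumpAt T L W k q) :
    numDistinct (endpoint T L σ) (q + 2) = k := by
  obtain ⟨-, hcount, hjump⟩ := Finset.mem_filter.1 hσ
  rw [numDistinct_add_two (endpoint_mono hL heven), if_pos hjump, hcount]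

lemma disjoint_jumpAt {q' : ℕ} (hqq' : q < q') :
    Disjoint (jumpAt T L W k q) (jumpAt T L W k q') := by
  refine Finset.disjoint_left.2 fun σ hσ hσ' => ?_
  have hk := numDistinct_add_two_of_mem_jumpAt hL heven hσ
  have hk' := (Finset.mem_filter.1 hσ').2.1
  have := numDistinct_mono (e := endpoint T L σ) (show q + 2 ≤ q' + 1 by omega)
  omega

lemma sum_card_jumpAt_le {n : ℕ} :
    ∑ q ∈ Finset.range (n - 2), #(jumpAt T L W k q) ≤ #(distinctAtLeast T L W n k) := by
  rw [← Finset.card_biUnion]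
  · refine Finset.card_le_card fun σ hσ => ?_
    obtain ⟨q, hq, hσq⟩ := Finset.mem_biUnion.1 hσ
    refine Finset.mem_filter.2 ⟨(Finset.mem_filter.1 hσq).1, ?_⟩
    rw [← numDistinct_add_two_of_mem_jumpAt hL heven hσq]
    exact numDistinct_mono (by have := Finset.mem_range.1 hq; omega)
  · intro q _ q' _ hqq'
    rcases lt_or_gt_of_ne hqq' with hlt | hlt
    exacts [disjoint_jumpAt hL heven hlt, (disjoint_jumpAt hL heven hlt).symm]

theorem card_distinctAtLeast_mul_two_pow_le {n : ℕ} (hW : ∀ i < n, lightCone T (L i) ⊆ W)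
    (hk : 1 ≤ k) :
    #(distinctAtLeast T L W n (k + 1)) * 2 ^ #W ≤
      #(distinctAtLeast T L W n k) * #(distinctAtLeast T L W n 2) := by
  rcases hk.eq_or_lt with rfl | hk
  · rcases Nat.eq_zero_or_pos n with rfl | hn
    · simp [distinctAtLeast, numDistinct]
    have hall : distinctAtLeast T L W n 1 = W.powerset :=
      Finset.filter_true_of_mem fun σ _ => numDistinct_pos hn
    rw [hall, Finset.card_powerset, mul_comm]
  calc #(distinctAtLeast T L W n (k + 1)) * 2 ^ #W
      ≤ (∑ q ∈ Finset.range (n - 2),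
          #(jumpAt T L W k q ∩ endpointLt T L W (q + 1) (n - 1))) * 2 ^ #W :=
        Nat.mul_le_mul_right _ ((Finset.card_le_card
          (distinctAtLeast_subset_biUnion hL heven hk)).trans Finset.card_biUnion_le)
    _ ≤ ∑ q ∈ Finset.range (n - 2), #(jumpAt T L W k q) * #(distinctAtLeast T L W n 2) := by
      rw [Finset.sum_mul]
      refine Finset.sum_le_sum fun q hq => ?_
      have hq : q + 2 < n := by have := Finset.mem_range.1 hq; omega
      exact (card_jumpAt_inter_endpointLt_le hL heven (hW _ (by omega)) (by omega)).trans
        (Nat.mul_le_mul_left _ (Finset.card_le_card (endpointLt_subset_distinctAtLeast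
          (by omega))))
    _ ≤ #(distinctAtLeast T L W n k) * #(distinctAtLeast T L W n 2) := by
      rw [← Finset.sum_mul]
      exact Nat.mul_le_mul_right _ (sum_card_jumpAt_le hL heven)

end Events

def numEndpoints {Ω : Type*} (Δ : ℤ → ℕ → Ω → ℤ) {n : ℕ} (l : Fin n → ℤ) (T : ℕ) (ω : Ω) : ℕ :=
  #(Finset.univ.image fun i => walk Δ (l i) ω T)

lemma numEndpoints_eq_numDistinct {T n : ℕ} (l : Fin n → ℤ) {L : ℕ → ℤ}
    (hLl : ∀ i : Fin n, L i = l i) (σ : Finset (ℤ × ℕ)) :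
    numEndpoints configStep l T σ = numDistinct (endpoint T L σ) n := by
  refine congrArg Finset.card (Finset.ext fun x => ?_)
  simp only [Finset.mem_image, Finset.mem_univ, true_and, Finset.mem_range, endpoint]
  constructor
  · rintro ⟨i, rfl⟩
    exact ⟨i, i.2, by rw [hLl]⟩
  · rintro ⟨i, hi, rfl⟩
    exact ⟨⟨i, hi⟩, by rw [← hLl]⟩

lemma two_le_numEndpoints {T n : ℕ} {l : Fin n → ℤ} {i j : Fin n} (hij : ¬ Even (l i - l j))
    (σ : Finset (ℤ × ℕ)) : 2 ≤ numEndpoints configStep l T σ :=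
  Finset.one_lt_card.2 ⟨_, Finset.mem_image_of_mem _ (Finset.mem_univ j), _,
    Finset.mem_image_of_mem _ (Finset.mem_univ i),
    walk_ne_walk_of_not_even (configStep_eq_one_or σ) hij T⟩

theorem card_le_numEndpoints_mul_two_pow_le {T k n : ℕ} {W : Finset (ℤ × ℕ)} (l : Fin n → ℤ)
    (hl : Monotone l) (hW : ∀ i, lightCone T (l i) ⊆ W) (hk : 1 ≤ k) :
    #{σ ∈ W.powerset | k + 1 ≤ numEndpoints configStep l T σ} * 2 ^ #W ≤
      #{σ ∈ W.powerset | k ≤ numEndpoints configStep l T σ} *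
        #{σ ∈ W.powerset | 2 ≤ numEndpoints configStep l T σ} := by
  by_cases hpar : ∀ i j, Even (l i - l j)
  · rcases Nat.eq_zero_or_pos n with rfl | hn
    · simp [numEndpoints]
    let L : ℕ → ℤ := fun i => l ⟨min i (n - 1), by omega⟩
    have hLl : ∀ i : Fin n, L i = l i := fun i => congrArg l (Fin.ext (min_eq_left (by omega)))
    simp only [numEndpoints_eq_numDistinct l hLl]
    refine card_distinctAtLeast_mul_two_pow_le (fun i j hij => hl (Fin.mk_le_mk.2 (min_le_min_right _ hij)))
      (fun i j => hpar _ _) (fun i hi => ?_) hk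
    change lightCone T (L i) ⊆ W
    rw [hLl ⟨i, hi⟩]
    exact hW _
  · obtain ⟨i, j, hij⟩ : ∃ i j, ¬ Even (l i - l j) := by simpa using hpar
    have hall : {σ ∈ W.powerset | 2 ≤ numEndpoints configStep l T σ} = W.powerset :=
      Finset.filter_true_of_mem fun σ _ => two_le_numEndpoints hij σ
    rw [hall, Finset.card_powerset]
    exact Nat.mul_le_mul_right _
      (Finset.card_le_card (Finset.monotone_filter_right _ fun _ _ h => by omega))

lemma exists_lightCone_subset {ι : Type*} [Fintype ι] (T : ℕ) (l : ι → ℤ) :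
    ∃ W : Finset (ℤ × ℕ), ∀ i, lightCone T (l i) ⊆ W := by
  classical
  refine ⟨Finset.univ.biUnion fun i => Finset.Icc (l i - T) (l i + T) ×ˢ Finset.range T,
    fun i w ⟨ht, hz⟩ => ?_⟩
  have ht' : (w.2 : ℤ) ≤ T := by exact_mod_cast ht.le
  rw [abs_le] at hz
  simp only [Finset.coe_biUnion, Finset.coe_univ, Set.mem_univ, Set.iUnion_true,
    Set.mem_iUnion, Finset.coe_product, Finset.coe_Icc, Finset.coe_range, Set.mem_prod,
    Set.mem_Icc, Set.mem_Iio]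
  exact ⟨i, ⟨by omega, by omega⟩, ht⟩

section Measure

variable {Ω : Type*} {Δ : ℤ → ℕ → Ω → ℤ}

def configOn (Δ : ℤ → ℕ → Ω → ℤ) (W : Finset (ℤ × ℕ)) (ω : Ω) : Finset (ℤ × ℕ) :=
  {w ∈ W | Δ w.1 w.2 ω = 1}

lemma setOf_configOn_eq {W σ : Finset (ℤ × ℕ)} (hσ : σ ⊆ W) :
    {ω | configOn Δ W ω = σ} = ⋂ w ∈ W, Δ w.1 w.2 ⁻¹' (if w ∈ σ then {1} else {1}ᶜ) := by
  ext ω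
  simp only [Set.mem_ofPred_eq, Set.mem_iInter, Finset.ext_iff, configOn, Finset.mem_filter]
  constructor
  · intro h w hw
    by_cases hwσ : w ∈ σ
    · simpa [hwσ] using ((h w).2 hwσ).2
    · simpa [hwσ, hw] using h w
  · intro h w
    by_cases hw : w ∈ W
    · by_cases hwσ : w ∈ σ <;> simpa [hw, hwσ] using h w hw
    · exact iff_of_false (fun h' => hw h'.1) fun h' => hw (hσ h')

variable [MeasureSpace Ω] (hmeas : ∀ z j, Measurable (Δ z j))
  (hlaw : ∀ z j, Measure.map (Δ z j) (volume : Measure Ω) =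
    (2⁻¹ : ℝ≥0∞) • Measure.dirac (1 : ℤ) + (2⁻¹ : ℝ≥0∞) • Measure.dirac (-1 : ℤ))
include hmeas hlaw

lemma volume_preimage (z : ℤ) (j : ℕ) (S : Set ℤ) :
    volume (Δ z j ⁻¹' S) = 2⁻¹ * S.indicator 1 1 + 2⁻¹ * S.indicator 1 (-1) := by
  rw [← Measure.map_apply (hmeas z j) (MeasurableSet.of_discrete), hlaw]
  simp [Measure.dirac_apply' _ (MeasurableSet.of_discrete)]

lemma ae_eq_configStep (W : Finset (ℤ × ℕ)) :
    ∀ᵐ ω, ∀ w ∈ W, Δ w.1 w.2 ω = configStep w.1 w.2 (configOn Δ W ω) := by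
  refine (Filter.eventually_all_finset W).2 fun w hw => ?_
  have hpm : ∀ᵐ ω, ω ∉ Δ w.1 w.2 ⁻¹' ({1, -1} : Set ℤ)ᶜ :=
    measure_eq_zero_iff_ae_notMem.1 (by rw [volume_preimage hmeas hlaw]; simp)
  filter_upwards [hpm] with ω hω
  simp only [Set.mem_preimage, Set.mem_compl_iff, Set.mem_insert_iff, Set.mem_singleton_iff,
    not_not] at hω
  simp only [configStep, configOn, Finset.mem_filter, hw, true_and]
  split_ifs with h <;> tauto

lemma numEndpoints_ae_eq {n T : ℕ} {l : Fin n → ℤ} {W : Finset (ℤ × ℕ)}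
    (hW : ∀ i, lightCone T (l i) ⊆ W) :
    ∀ᵐ ω, numEndpoints Δ l T ω = numEndpoints configStep l T (configOn Δ W ω) := by
  filter_upwards [ae_eq_configStep hmeas hlaw W] with ω hω
  refine congrArg Finset.card (Finset.image_congr fun i _ => ?_)
  exact walk_congr (fun t ht => hω _ (hW i (walk_mem_lightCone (configStep_eq_one_or _) ht)))
    T le_rfl

variable (hindep : iIndepFun (fun p : ℤ × ℕ => Δ p.1 p.2) (volume : Measure Ω))
include hindep

lemma volume_configOn_eq {W σ : Finset (ℤ × ℕ)} (hσ : σ ⊆ W) :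
    volume {ω | configOn Δ W ω = σ} = 2⁻¹ ^ #W := by
  rw [setOf_configOn_eq hσ, hindep.measure_inter_preimage_eq_mul W
    fun _ _ => MeasurableSet.of_discrete, Finset.prod_congr rfl fun w _ => ?_, Finset.prod_const]
  rw [volume_preimage hmeas hlaw]
  split_ifs <;> simp

lemma volume_configOn_mem {W : Finset (ℤ × ℕ)} {G : Finset (Finset (ℤ × ℕ))}
    (hG : G ⊆ W.powerset) : volume {ω | configOn Δ W ω ∈ G} = #G * 2⁻¹ ^ #W := by
  have hunion : {ω | configOn Δ W ω ∈ G} = ⋃ σ ∈ G, {ω | configOn Δ W ω = σ} := by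
    ext; simp
  have hmeas' : ∀ σ ∈ G, MeasurableSet {ω | configOn Δ W ω = σ} := fun σ hσ => by
    rw [setOf_configOn_eq (Finset.mem_powerset.1 (hG hσ))]
    exact Finset.measurableSet_biInter W fun _ _ => hmeas _ _ MeasurableSet.of_discrete
  rw [hunion, measure_biUnion_finset (fun σ _ τ _ h => Set.disjoint_left.2 fun ω h1 h2 =>
    h (h1.symm.trans h2)) hmeas', Finset.sum_congr rfl fun σ hσ =>
    volume_configOn_eq hmeas hlaw hindep (Finset.mem_powerset.1 (hG hσ)), Finset.sum_const,
    nsmul_eq_mul]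

lemma volume_setOf_le_numEndpoints {n T : ℕ} {l : Fin n → ℤ} {W : Finset (ℤ × ℕ)}
    (hW : ∀ i, lightCone T (l i) ⊆ W) (m : ℕ) :
    volume {ω | m ≤ numEndpoints Δ l T ω} =
      #{σ ∈ W.powerset | m ≤ numEndpoints configStep l T σ} * 2⁻¹ ^ #W := by
  rw [← volume_configOn_mem hmeas hlaw hindep (Finset.filter_subset _ _)]
  refine measure_congr (Filter.eventuallyEq_set.2 ?_)
  filter_upwards [numEndpoints_ae_eq hmeas hlaw hW] with ω hω
  simp [hω, configOn]

end Measure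

lemma natCast_mul_inv_two_pow_le {a b c N : ℕ} (h : a * 2 ^ N ≤ b * c) :
    (a : ℝ≥0∞) * 2⁻¹ ^ N ≤ b * 2⁻¹ ^ N * (c * 2⁻¹ ^ N) := by
  have hN : (2 : ℝ≥0∞) ^ N * 2⁻¹ ^ N = 1 := by
    rw [← mul_pow, ENNReal.mul_inv_cancel two_ne_zero ENNReal.ofNat_ne_top, one_pow]
  calc (a : ℝ≥0∞) * 2⁻¹ ^ N = a * 2 ^ N * (2⁻¹ ^ N * 2⁻¹ ^ N) := by
        rw [mul_assoc, ← mul_assoc (2 ^ N : ℝ≥0∞), hN, one_mul]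
    _ ≤ b * c * (2⁻¹ ^ N * 2⁻¹ ^ N) := by gcongr ?_ * _; exact_mod_cast h
    _ = b * 2⁻¹ ^ N * (c * 2⁻¹ ^ N) := by ring

end CoalescingWalks

open CoalescingWalks

theorem coalescing_walks_eta_submult_general {Ω : Type*} [MeasureSpace Ω]
    (Δ : ℤ → ℕ → Ω → ℤ)
    (hmeas : ∀ z j, Measurable (Δ z j))
    (hlaw : ∀ z j, Measure.map (Δ z j) (volume : Measure Ω) =
      (2⁻¹ : ℝ≥0∞) • Measure.dirac (1 : ℤ) + (2⁻¹ : ℝ≥0∞) • Measure.dirac (-1 : ℤ))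
    (hindep : iIndepFun
      (fun p : ℤ × ℕ => Δ p.1 p.2) (volume : Measure Ω))
    (n : ℕ) (l : Fin n → ℤ) (hl : StrictMono l) (T : ℕ)
    (η : Ω → ℕ)
    (hη : ∀ ω, η ω = (Finset.univ.image fun i : Fin n => walk Δ (l i) ω T).card)
    (k : ℕ) (hk : 1 ≤ k) :
    volume {ω | k + 1 ≤ η ω} ≤ volume {ω | k ≤ η ω} * volume {ω | 2 ≤ η ω} := by
  obtain ⟨W, hW⟩ := exists_lightCone_subset T l
  obtain rfl : η = numEndpoints Δ l T := funext hη
  simp only [volume_setOf_le_numEndpoints hmeas hlaw hindep hW]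
  exact natCast_mul_inv_two_pow_le (card_le_numEndpoints_mul_two_pow_le l hl.monotone hW hk)

/-- For coalescing simple symmetric random walks `X₁,…,Xₙ` started from ordered
initial positions, with `η_T` the number of distinct values among the `Xᵢ(T)`,
one has `P(η_T ≥ k+1) ≤ P(η_T ≥ k) ⬝ P(η_T ≥ 2)`. -/
theorem coalescing_walks_eta_submult {Ω : Type*} [MeasureSpace Ω]
    [IsProbabilityMeasure (volume : Measure Ω)]
    (Δ : ℤ → ℕ → Ω → ℤ)
    (hmeas : ∀ z j, Measurable (Δ z j))
    (hlaw : ∀ z j, Measure.map (Δ z j) (volume : Measure Ω) =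
      (2⁻¹ : ℝ≥0∞) • Measure.dirac (1 : ℤ) + (2⁻¹ : ℝ≥0∞) • Measure.dirac (-1 : ℤ))
    (hindep : iIndepFun
      (fun p : ℤ × ℕ => Δ p.1 p.2) (volume : Measure Ω))
    (n : ℕ) (l : Fin n → ℤ) (hl : StrictMono l) (T : ℕ)
    (η : Ω → ℕ)
    (hη : ∀ ω, η ω = (Finset.univ.image fun i : Fin n => walk Δ (l i) ω T).card)
    (k : ℕ) (hk : 1 ≤ k) :
    volume {ω | k + 1 ≤ η ω} ≤ volume {ω | k ≤ η ω} * volume {ω | 2 ≤ η ω} :=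
  coalescing_walks_eta_submult_general Δ hmeas hlaw hindep n l hl T η hη k hk
end
end
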